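/- Let d ≥ 1, Nα ≥ 2, Nβ ≥ 1, N = Nα + Nβ, let X_1,…,X_N ⊆ ℝ^d be open sets, and let u_1,…,u_N with u_i : X_i → ℝ satisfy the splitting inequality for the cost c. Fix x_1⁰ ∈ X_1 at which u_1 is differentiable, and suppose that for k = 1, 2 the points (x_1⁰, x_{2k},…,x_{Nα k}, y_{1k},…,y_{Nβ k}) ∈ X_1×…×X_N attain equality in the splitting inequality. Then y_{s1} = y_{s2} for every s ∈ {1,…,Nβ}. -/

import Mathlib

open MeasureTheory RealInnerProductSpace

noncomputable section

/-- The "starred" vector `y* = (-2 y¹, y², …, y^d)`. -/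
def ystar {d : ℕ} (hd : 0 < d) (y : EuclideanSpace ℝ (Fin d)) : EuclideanSpace ℝ (Fin d) :=
  y - (3 * y ⟨0, hd⟩) • EuclideanSpace.single (⟨0, hd⟩ : Fin d) (1 : ℝ)

/-- The cost `c(x_1,…,x_Nα,y_1,…,y_Nβ) = ∑_i ∑_j x_i · y_j*`, in block coordinates. -/
def costxy {d Nα Nβ : ℕ} (hd : 0 < d)
    (x : Fin Nα → EuclideanSpace ℝ (Fin d)) (y : Fin Nβ → EuclideanSpace ℝ (Fin d)) : ℝ :=
  ∑ i : Fin Nα, ∑ j : Fin Nβ, ⟪x i, ystar hd (y j)⟫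

/-! The cost sees `x` only through `X = ∑ i, x i` and `y` only through `Z = ∑ j, y j*`, as
`c = ⟪X, Z⟫`. At an equality point the first coordinate therefore maximises `u₁ - ⟪·, Z⟫`, so
`Z = ∇u₁(x₁⁰)` is the same for both equality points. Comparing the two equalities with the crossed
inequalities shows that `(x₁, y₂)` is an equality point as well. For fixed `x` the splitting
inequality is separable in the `y j`, so exchanging a single coordinate between two maximisers
gives a third one; the gradient identity there yields `y_{s1}* = y_{s2}*`. -/

open Function

lemma sum_apply_update {ι α M : Type*} [Fintype ι] [DecidableEq ι] [AddCommGroup M]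
    (F : ι → α → M) (x : ι → α) (j : ι) (v : α) :
    ∑ i, F i (update x j v i) = ∑ i, F i (x i) - F j (x j) + F j v := by
  rw [Finset.sum_congr rfl fun i _ => apply_update F x j v i,
    Finset.sum_update_of_mem (Finset.mem_univ j),
    Finset.sum_eq_add_sum_sdiff_singleton_of_mem (Finset.mem_univ j) fun i => F i (x i)]
  abel

lemma forall_update_mem {ι α : Type*} [DecidableEq ι] {S : ι → Set α} {y : ι → α}
    (hy : ∀ j, y j ∈ S j) {s : ι} {v : α} (hv : v ∈ S s) : ∀ j, update y s v j ∈ S j :=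
  (forall_update_iff y (p := fun j w => w ∈ S j)).2 ⟨hv, fun j _ => hy j⟩

section SeparableMax

variable {ι α M : Type*} [Fintype ι] [DecidableEq ι]
  [AddCommGroup M] [PartialOrder M] [IsOrderedAddMonoid M]
  {S : ι → Set α} {g : ι → α → M} {c : M}

lemma apply_le_of_sum_le_of_sum_eq (hle : ∀ y : ι → α, (∀ j, y j ∈ S j) → ∑ j, g j (y j) ≤ c)
    {y : ι → α} (hy : ∀ j, y j ∈ S j) (heq : ∑ j, g j (y j) = c)
    {s : ι} {v : α} (hv : v ∈ S s) : g s v ≤ g s (y s) := by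
  have h := hle _ (forall_update_mem hy hv)
  rwa [sum_apply_update, heq, sub_add_eq_add_sub, sub_le_iff_le_add, add_le_add_iff_left] at h

lemma sum_update_eq_of_sum_eq (hle : ∀ y : ι → α, (∀ j, y j ∈ S j) → ∑ j, g j (y j) ≤ c)
    {y₁ y₂ : ι → α} (hy₁ : ∀ j, y₁ j ∈ S j) (hy₂ : ∀ j, y₂ j ∈ S j)
    (heq₁ : ∑ j, g j (y₁ j) = c) (heq₂ : ∑ j, g j (y₂ j) = c) (s : ι) :
    ∑ j, g j (update y₁ s (y₂ s) j) = c := by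
  have hs : g s (y₂ s) = g s (y₁ s) := le_antisymm
    (apply_le_of_sum_le_of_sum_eq hle hy₁ heq₁ (hy₂ s))
    (apply_le_of_sum_le_of_sum_eq hle hy₂ heq₂ (hy₁ s))
  rw [sum_apply_update, heq₁, hs, sub_add_cancel]

end SeparableMax

lemma fderiv_eq_innerSL_of_isLocalMax_sub_inner {E : Type*} [NormedAddCommGroup E]
    [InnerProductSpace ℝ E] {f : E → ℝ} {x₀ z : E} (hf : DifferentiableAt ℝ f x₀)
    (hmax : IsLocalMax (fun x => f x - ⟪z, x⟫) x₀) : fderiv ℝ f x₀ = innerSL ℝ z := by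
  have h : fderiv ℝ (fun x => f x - innerSL ℝ z x) x₀ = 0 := hmax.fderiv_eq_zero
  rw [fderiv_fun_sub hf (innerSL ℝ z).differentiableAt, (innerSL ℝ z).fderiv] at h
  exact sub_eq_zero.mp h

lemma ystar_injective {d : ℕ} (hd : 0 < d) : Injective (ystar hd) := by
  intro a b h
  have h₀ : a ⟨0, hd⟩ = b ⟨0, hd⟩ := by
    have := congrArg (· ⟨0, hd⟩) h
    simp only [ystar, PiLp.sub_apply, PiLp.smul_apply, PiLp.single_eq_same, smul_eq_mul,
      mul_one] at this
    linarith
  have hrecover : ∀ y, y = ystar hd y + (3 * y ⟨0, hd⟩) • EuclideanSpace.single ⟨0, hd⟩ 1 := by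
    simp [ystar]
  rw [hrecover a, hrecover b, h, h₀]

lemma costxy_eq_sum_inner_sum_ystar {d Nα Nβ : ℕ} (hd : 0 < d)
    (x : Fin Nα → EuclideanSpace ℝ (Fin d)) (y : Fin Nβ → EuclideanSpace ℝ (Fin d)) :
    costxy hd x y = ∑ i, ⟪x i, ∑ j, ystar hd (y j)⟫ := by
  simp only [costxy, inner_sum]

lemma costxy_eq_sum_inner_sum {d Nα Nβ : ℕ} (hd : 0 < d)
    (x : Fin Nα → EuclideanSpace ℝ (Fin d)) (y : Fin Nβ → EuclideanSpace ℝ (Fin d)) :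
    costxy hd x y = ∑ j, ⟪∑ i, x i, ystar hd (y j)⟫ := by
  rw [costxy, Finset.sum_comm]
  simp only [sum_inner]

section Splitting

variable {d Nα Nβ : ℕ} (hd : 0 < d)
  {Xa : Fin Nα → Set (EuclideanSpace ℝ (Fin d))} {Xb : Fin Nβ → Set (EuclideanSpace ℝ (Fin d))}
  {ua : Fin Nα → EuclideanSpace ℝ (Fin d) → ℝ} {ub : Fin Nβ → EuclideanSpace ℝ (Fin d) → ℝ}

def SplittingInequality (Xa : Fin Nα → Set (EuclideanSpace ℝ (Fin d)))
    (Xb : Fin Nβ → Set (EuclideanSpace ℝ (Fin d)))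
    (ua : Fin Nα → EuclideanSpace ℝ (Fin d) → ℝ) (ub : Fin Nβ → EuclideanSpace ℝ (Fin d) → ℝ) :
    Prop :=
  ∀ (x : Fin Nα → EuclideanSpace ℝ (Fin d)) (y : Fin Nβ → EuclideanSpace ℝ (Fin d)),
    (∀ i, x i ∈ Xa i) → (∀ j, y j ∈ Xb j) → ∑ i, ua i (x i) + ∑ j, ub j (y j) ≤ costxy hd x y

variable {hd}

/-- At an equality point, `x i` maximises `ua i - ⟪·, ∑ j, y j*⟫` over `Xa i`. -/
lemma fderiv_eq_innerSL_sum_ystar (hsplit : SplittingInequality hd Xa Xb ua ub)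
    {x : Fin Nα → EuclideanSpace ℝ (Fin d)} {y : Fin Nβ → EuclideanSpace ℝ (Fin d)}
    (hx : ∀ i, x i ∈ Xa i) (hy : ∀ j, y j ∈ Xb j)
    (heq : ∑ i, ua i (x i) + ∑ j, ub j (y j) = costxy hd x y)
    {i : Fin Nα} (hXa : IsOpen (Xa i)) (hdiff : DifferentiableAt ℝ (ua i) (x i)) :
    fderiv ℝ (ua i) (x i) = innerSL ℝ (∑ j, ystar hd (y j)) := by
  set g : Fin Nα → EuclideanSpace ℝ (Fin d) → ℝ := fun i w => ua i w - ⟪∑ j, ystar hd (y j), w⟫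
  have hslice : ∀ x' : Fin Nα → EuclideanSpace ℝ (Fin d),
      ∑ i, g i (x' i) = ∑ i, ua i (x' i) - costxy hd x' y := by
    intro x'
    simp only [g, Finset.sum_sub_distrib, costxy_eq_sum_inner_sum_ystar, real_inner_comm]
  refine fderiv_eq_innerSL_of_isLocalMax_sub_inner hdiff ?_
  filter_upwards [hXa.mem_nhds (hx i)] with w hw
  refine apply_le_of_sum_le_of_sum_eq (g := g) (c := -∑ j, ub j (y j)) (fun x' hx' => ?_) hx ?_ hw
  · linarith [hsplit x' y hx' hy, hslice x']
  · linarith [hslice x]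

lemma eq_costxy_of_sum_ystar_eq (hsplit : SplittingInequality hd Xa Xb ua ub)
    {x₁ x₂ : Fin Nα → EuclideanSpace ℝ (Fin d)} {y₁ y₂ : Fin Nβ → EuclideanSpace ℝ (Fin d)}
    (hx₁ : ∀ i, x₁ i ∈ Xa i) (hx₂ : ∀ i, x₂ i ∈ Xa i)
    (hy₁ : ∀ j, y₁ j ∈ Xb j) (hy₂ : ∀ j, y₂ j ∈ Xb j)
    (heq₁ : ∑ i, ua i (x₁ i) + ∑ j, ub j (y₁ j) = costxy hd x₁ y₁)
    (heq₂ : ∑ i, ua i (x₂ i) + ∑ j, ub j (y₂ j) = costxy hd x₂ y₂)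
    (hZ : ∑ j, ystar hd (y₁ j) = ∑ j, ystar hd (y₂ j)) :
    ∑ i, ua i (x₁ i) + ∑ j, ub j (y₂ j) = costxy hd x₁ y₂ := by
  have h₁₂ := hsplit x₁ y₂ hx₁ hy₂
  have h₂₁ := hsplit x₂ y₁ hx₂ hy₁
  simp only [costxy_eq_sum_inner_sum_ystar, hZ] at heq₁ heq₂ h₁₂ h₂₁ ⊢
  linarith

lemma eq_costxy_update (hsplit : SplittingInequality hd Xa Xb ua ub)
    {x : Fin Nα → EuclideanSpace ℝ (Fin d)} {y₁ y₂ : Fin Nβ → EuclideanSpace ℝ (Fin d)}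
    (hx : ∀ i, x i ∈ Xa i) (hy₁ : ∀ j, y₁ j ∈ Xb j) (hy₂ : ∀ j, y₂ j ∈ Xb j)
    (heq₁ : ∑ i, ua i (x i) + ∑ j, ub j (y₁ j) = costxy hd x y₁)
    (heq₂ : ∑ i, ua i (x i) + ∑ j, ub j (y₂ j) = costxy hd x y₂) (s : Fin Nβ) :
    ∑ i, ua i (x i) + ∑ j, ub j (update y₁ s (y₂ s) j) = costxy hd x (update y₁ s (y₂ s)) := by
  set g : Fin Nβ → EuclideanSpace ℝ (Fin d) → ℝ := fun j w => ub j w - ⟪∑ i, x i, ystar hd w⟫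
  have hslice : ∀ y : Fin Nβ → EuclideanSpace ℝ (Fin d),
      ∑ j, g j (y j) = ∑ j, ub j (y j) - costxy hd x y := by
    intro y
    simp only [g, Finset.sum_sub_distrib, costxy_eq_sum_inner_sum]
  have hle : ∀ y : Fin Nβ → EuclideanSpace ℝ (Fin d), (∀ j, y j ∈ Xb j) →
      ∑ j, g j (y j) ≤ -∑ i, ua i (x i) := fun y hy => by
    linarith [hsplit x y hx hy, hslice y]
  have h := sum_update_eq_of_sum_eq hle hy₁ hy₂ (by linarith [hslice y₁])
    (by linarith [hslice y₂]) s
  linarith [hslice (update y₁ s (y₂ s))]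

end Splitting

theorem stmt_10 {d Nα Nβ : ℕ} (hd : 0 < d) (hNα : 2 ≤ Nα)
    (Xa : Fin Nα → Set (EuclideanSpace ℝ (Fin d)))
    (Xb : Fin Nβ → Set (EuclideanSpace ℝ (Fin d)))
    (hXa : ∀ i, IsOpen (Xa i))
    (ua : Fin Nα → EuclideanSpace ℝ (Fin d) → ℝ)
    (ub : Fin Nβ → EuclideanSpace ℝ (Fin d) → ℝ)
    (hsplit : ∀ (x : Fin Nα → EuclideanSpace ℝ (Fin d))
        (y : Fin Nβ → EuclideanSpace ℝ (Fin d)),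
        (∀ i, x i ∈ Xa i) → (∀ j, y j ∈ Xb j) →
        ∑ i, ua i (x i) + ∑ j, ub j (y j) ≤ costxy hd x y)
    (x10 : EuclideanSpace ℝ (Fin d))
    (hdiff : DifferentiableAt ℝ (ua ⟨0, by omega⟩) x10)
    (x1 x2 : Fin Nα → EuclideanSpace ℝ (Fin d))
    (y1 y2 : Fin Nβ → EuclideanSpace ℝ (Fin d))
    (hx1 : ∀ i, x1 i ∈ Xa i) (hx2 : ∀ i, x2 i ∈ Xa i)
    (hy1 : ∀ j, y1 j ∈ Xb j) (hy2 : ∀ j, y2 j ∈ Xb j)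
    (hx10 : x1 ⟨0, by omega⟩ = x10) (hx20 : x2 ⟨0, by omega⟩ = x10)
    (heq1 : ∑ i, ua i (x1 i) + ∑ j, ub j (y1 j) = costxy hd x1 y1)
    (heq2 : ∑ i, ua i (x2 i) + ∑ j, ub j (y2 j) = costxy hd x2 y2) :
    ∀ s : Fin Nβ, y1 s = y2 s := by
  intro s
  have hgrad₁ := fderiv_eq_innerSL_sum_ystar hsplit hx1 hy1 heq1 (hXa _) (hx10 ▸ hdiff)
  have hgrad₂ := fderiv_eq_innerSL_sum_ystar hsplit hx2 hy2 heq2 (hXa _) (hx20 ▸ hdiff)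
  rw [hx10] at hgrad₁
  rw [hx20] at hgrad₂
  have hZ := innerSL_inj.mp (hgrad₁.symm.trans hgrad₂)
  have heq₁₂ := eq_costxy_of_sum_ystar_eq hsplit hx1 hx2 hy1 hy2 heq1 heq2 hZ
  have heqs := eq_costxy_update hsplit hx1 hy1 hy2 heq1 heq₁₂ s
  have hgrads := fderiv_eq_innerSL_sum_ystar hsplit hx1
    (forall_update_mem hy1 (hy2 s)) heqs (hXa _) (hx10 ▸ hdiff)
  rw [hx10, hgrad₁, innerSL_inj, sum_apply_update (fun _ => ystar hd)] at hgrads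
  exact ystar_injective hd (by linear_combination (norm := module) hgrads)
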